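/- arXiv:math/0511689 — 2 statements merged into one kernel-verified Lean document; each statement's English description precedes it below -/
import Mathlib

section
/- Let n, a, b, p, q be integers with b ≥ 1, a ≥ 0, n = a·b and p + q = n, p, q ≥ 0. Let x_1, …, x_b and y_1, …, y_b be nonnegative integers such that x_1 + … + x_b = p, y_1 + … + y_b = q, and x_i + y_i = a for every i = 1, …, b. Write p = b·x + y with integers x, y satisfying 0 ≤ y < b (i.e. x = ⌊p/b⌋ and y = p − b·x). Then the sum x_1·y_1 + … + x_b·y_b is at most (b − y)·x·(a − x) + y·(x + 1)·(a − x − 1). -/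
lemma aux_mul_pred_nonneg (m : ℤ) : 0 ≤ m * (m - 1) := by
  rcases le_or_gt m 0 with h | h
  · nlinarith
  · nlinarith

/-- Lemme 4.3 (inequality half): under the constraints `∑ xᵢ = p`, `∑ yᵢ = q`,
`xᵢ + yᵢ = a`, `xᵢ, yᵢ ≥ 0`, with `n = a·b`, `p + q = n`, and `p = b·x + y`,
`0 ≤ y < b`, one has `∑ xᵢ·yᵢ ≤ (b − y)·x·(a − x) + y·(x + 1)·(a − x − 1)`. -/
theorem stmt0 (b : ℕ) (hb : 1 ≤ b) (n a p q x y : ℤ) (ha : 0 ≤ a)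
    (hn : n = a * b) (hpq : p + q = n) (hp : 0 ≤ p) (hq : 0 ≤ q)
    (xs ys : Fin b → ℤ)
    (hxs : ∀ i, 0 ≤ xs i) (hys : ∀ i, 0 ≤ ys i)
    (hxsum : ∑ i, xs i = p) (hysum : ∑ i, ys i = q)
    (hxy : ∀ i, xs i + ys i = a)
    (hx : p = b * x + y) (hy0 : 0 ≤ y) (hyb : y < b) :
    ∑ i, xs i * ys i ≤ ((b : ℤ) - y) * x * (a - x) + y * (x + 1) * (a - x - 1) := by
  have key : ∀ i : Fin b, xs i * ys i ≤ x * (a - x) + (a - 2*x - 1) * (xs i - x) := by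
    intro i
    have h1 : ys i = a - xs i := by linarith [hxy i]
    have h2 := aux_mul_pred_nonneg (xs i - x)
    have heq : x * (a - x) + (a - 2*x - 1) * (xs i - x) - xs i * ys i
        = (xs i - x) * (xs i - x - 1) := by rw [h1]; ring
    linarith
  have hsum : ∑ i, xs i * ys i ≤
      ∑ i, (x * (a - x) + (a - 2*x - 1) * (xs i - x)) :=
    Finset.sum_le_sum fun i _ => key i
  have hexp : ∑ i, (x * (a - x) + (a - 2*x - 1) * (xs i - x))
      = (b : ℤ) * (x * (a - x)) + (a - 2*x - 1) * (p - b * x) := by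
    rw [Finset.sum_add_distrib, Finset.sum_const, Finset.card_univ, Fintype.card_fin,
      ← Finset.mul_sum, Finset.sum_sub_distrib, hxsum, Finset.sum_const,
      Finset.card_univ, Fintype.card_fin]
    push_cast
    ring
  rw [hexp] at hsum
  have hy : y = p - b * x := by linarith
  calc ∑ i, xs i * ys i ≤ (b : ℤ) * (x * (a - x)) + (a - 2*x - 1) * (p - b * x) := hsum
    _ = ((b : ℤ) - y) * x * (a - x) + y * (x + 1) * (a - x - 1) := by rw [← hy]; ring
end

section
/- Let n, a, b, p, q be integers with b ≥ 1, a ≥ 0, n = a·b and p + q = n, p, q ≥ 0. Let x_1, …, x_b and y_1, …, y_b be nonnegative integers such that x_1 + … + x_b = p, y_1 + … + y_b = q, and x_i + y_i = a for every i = 1, …, b. Write p = b·x + y with integers x, y satisfying 0 ≤ y < b. Then the sum x_1·y_1 + … + x_b·y_b is congruent modulo 2 to (b − y)·x·(a − x) + y·(x + 1)·(a − x − 1). -/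
/-- Lemme 4.3 (parity half): under the constraints `∑ xᵢ = p`, `∑ yᵢ = q`,
`xᵢ + yᵢ = a`, `xᵢ, yᵢ ≥ 0`, with `n = a·b`, `p + q = n`, and `p = b·x + y`,
`0 ≤ y < b`, the sum `∑ xᵢ·yᵢ` is congruent mod 2 to
`(b − y)·x·(a − x) + y·(x + 1)·(a − x − 1)`. -/
theorem stmt1 (b : ℕ) (hb : 1 ≤ b) (n a p q x y : ℤ) (ha : 0 ≤ a)
    (hn : n = a * b) (hpq : p + q = n) (hp : 0 ≤ p) (hq : 0 ≤ q)
    (xs ys : Fin b → ℤ)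
    (hxs : ∀ i, 0 ≤ xs i) (hys : ∀ i, 0 ≤ ys i)
    (hxsum : ∑ i, xs i = p) (hysum : ∑ i, ys i = q)
    (hxy : ∀ i, xs i + ys i = a)
    (hx : p = b * x + y) (hy0 : 0 ≤ y) (hyb : y < b) :
    Int.ModEq 2 (∑ i, xs i * ys i)
      (((b : ℤ) - y) * x * (a - x) + y * (x + 1) * (a - x - 1)) := by
  have key : ∀ z : ZMod 2, z * z = z := by decide
  have h2 : (2 : ZMod 2) = 0 := by decide
  have goal_iff := ZMod.intCast_eq_intCast_iff (∑ i, xs i * ys i)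
    (((b : ℤ) - y) * x * (a - x) + y * (x + 1) * (a - x - 1)) 2
  refine goal_iff.mp ?_
  push_cast
  -- both sides equal (a+1)*p in ZMod 2
  have hp' : ((p : ZMod 2)) = (b : ZMod 2) * x + y := by
    have : ((p : ℤ) : ZMod 2) = (((b : ℤ) * x + y : ℤ) : ZMod 2) := by rw [hx]
    push_cast at this
    simpa using this
  have hsum : (∑ i, ((xs i : ZMod 2)) * ((ys i : ZMod 2)))
      = ((a : ZMod 2) + 1) * (p : ZMod 2) := by
    have step : ∀ i : Fin b, ((xs i : ZMod 2)) * ((ys i : ZMod 2))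
        = ((a : ZMod 2) + 1) * (xs i : ZMod 2) := by
      intro i
      have h' : ((xs i : ZMod 2)) + ((ys i : ZMod 2)) = (a : ZMod 2) := by
        have := congrArg (fun t : ℤ => ((t : ZMod 2))) (hxy i)
        push_cast at this
        simpa using this
      have hy' : ((ys i : ZMod 2)) = (a : ZMod 2) - (xs i : ZMod 2) := by
        linear_combination h'
      rw [hy']
      linear_combination (-1 : ZMod 2) * key ((xs i : ZMod 2)) - (xs i : ZMod 2) * h2
    rw [Finset.sum_congr rfl (fun i _ => step i), ← Finset.mul_sum]
    congr 1
    have := congrArg (fun t : ℤ => ((t : ZMod 2))) hxsum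
    push_cast at this
    simpa using this
  calc (∑ i, ((xs i : ZMod 2)) * ((ys i : ZMod 2)))
      = ((a : ZMod 2) + 1) * (p : ZMod 2) := hsum
    _ = ((b : ZMod 2) - y) * x * ((a : ZMod 2) - x)
        + (y : ZMod 2) * (x + 1) * ((a : ZMod 2) - x - 1) := by
        rw [hp']
        linear_combination ((b : ZMod 2)) * key (x : ZMod 2)
          + ((b : ZMod 2) * x + (y : ZMod 2) * x + (y : ZMod 2)) * h2
end
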